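/- arXiv:1111.2820 — 3 statements merged into one kernel-verified Lean document; each statement's English description precedes it below -/
import Mathlib

section
/- Let f : X → X be an ergodic measure-preserving map of a probability space (X, 𝓑, μ) and P a finite partition with 0 < h(f,P) < ∞. Then P is a measure-sensitive partition for f. -/
/-! If an itinerary class `S x := sameItinerary f P x` had measure `c > 0`, consider `y ↦ μ (S y)`.
It is measurable, being the infimum over `n` of the measures of the cells of `⋁_{k ≤ n} f^{-k} P`,
and it does not decrease along orbits because `S y ⊆ f⁻¹ (S (f y))`. Hence `{y | c ≤ μ (S y)}`
is invariant mod 0 and contains `S x`, so it has full measure by ergodicity. A cell of the join of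
positive measure meets this set, and contains the class of any of its points, so it has measure
at least `c`. Therefore `H(⋁_{k ≤ n} f^{-k} P) ≤ -log c` for every `n`, and the entropy vanishes. -/

open MeasureTheory Set Function Filter
open scoped ENNReal

variable {X : Type*}

/-- A countable partition of a measure space: a countable disjoint collection of
nonempty measurable sets whose union is the whole space. -/
def IsCountablePartition [MeasurableSpace X] (P : Set (Set X)) : Prop :=
  P.Countable ∧ (∀ ξ ∈ P, MeasurableSet ξ) ∧ (∀ ξ ∈ P, ξ.Nonempty) ∧
    P.PairwiseDisjoint id ∧ ⋃₀ P = Set.univ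

/-- The set of points `y` having the same `P`-itinerary as `x` under `f`:
for every `n`, `f^n y` lies in the element of `P` containing `f^n x`. -/
def sameItinerary (f : X → X) (P : Set (Set X)) (x : X) : Set X :=
  {y | ∀ n : ℕ, ∃ ξ ∈ P, f^[n] x ∈ ξ ∧ f^[n] y ∈ ξ}

/-- A measure-sensitive partition for `f`: a countable partition such that for every `x`
the set of points with the same itinerary as `x` is `μ`-null. -/
def IsMeasureSensitivePartition [MeasurableSpace X] (μ : Measure X) (f : X → X)
    (P : Set (Set X)) : Prop :=
  IsCountablePartition P ∧ ∀ x : X, μ (sameItinerary f P x) = 0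

/-- A map is measure-expansive if it admits a measure-sensitive partition. -/
def MeasureExpansive [MeasurableSpace X] (μ : Measure X) (f : X → X) : Prop :=
  ∃ P : Set (Set X), IsMeasureSensitivePartition μ f P

/-- An atom of a measure: a measurable set of positive measure all of whose measurable
subsets have measure `0` or full measure of the set. -/
def IsMeasureAtom [MeasurableSpace X] (μ : Measure X) (A : Set X) : Prop :=
  MeasurableSet A ∧ 0 < μ A ∧ ∀ B : Set X, B ⊆ A → MeasurableSet B → μ B = 0 ∨ μ B = μ A

/-- A measure is nonatomic if it has no atoms. -/
def Nonatomic [MeasurableSpace X] (μ : Measure X) : Prop :=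
  ∀ A : Set X, ¬ IsMeasureAtom μ A

/-- `f` is ergodic (mod 0): every measurable set `A` with `A = f⁻¹ A` mod 0 satisfies
`μ A = 0` or `μ (X \\ A) = 0`. -/
def ErgodicMod0 [MeasurableSpace X] (μ : Measure X) (f : X → X) : Prop :=
  ∀ A : Set X, MeasurableSet A → μ (symmDiff A (f ⁻¹' A)) = 0 → μ A = 0 ∨ μ Aᶜ = 0

/-- The join `⋁_{k=0}^{n} f^{-k}(P)`: all nonempty intersections `⋂_{k=0}^{n} f^{-k}(ξ_k)`
with `ξ_k ∈ P`. -/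
def joinSeq (f : X → X) (P : Set (Set X)) (n : ℕ) : Set (Set X) :=
  {A | A.Nonempty ∧ ∃ ξ : ℕ → Set X, (∀ k, k ≤ n → ξ k ∈ P) ∧
    A = ⋂ k ∈ Finset.range (n + 1), f^[k] ⁻¹' ξ k}

/-- The entropy `H(P) = -∑_{ξ ∈ P} μ(ξ) log μ(ξ)` of a partition. -/
noncomputable def partitionEntropy [MeasurableSpace X] (μ : Measure X)
    (P : Set (Set X)) : ℝ :=
  ∑' ξ : P, Real.negMulLog (μ (ξ : Set X)).toReal

theorem measurable_of_const_on_countable_cover {α β : Type*} [MeasurableSpace α]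
    [MeasurableSpace β] {Q : Set (Set α)} (hQ : Q.Countable) (hmeas : ∀ q ∈ Q, MeasurableSet q)
    (hcover : ⋃₀ Q = univ) {φ : α → β} (hconst : ∀ q ∈ Q, ∀ a ∈ q, ∀ b ∈ q, φ a = φ b) :
    Measurable φ := by
  intro B _
  have hpre : φ ⁻¹' B = ⋃₀ {q ∈ Q | ∃ a ∈ q, φ a ∈ B} := by
    ext y
    refine ⟨fun hy => ?_, fun ⟨q, ⟨hq, a, ha, haB⟩, hy⟩ => ?_⟩
    · obtain ⟨q, hq, hyq⟩ := mem_sUnion.mp (hcover.symm ▸ mem_univ y)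
      exact ⟨q, ⟨hq, y, hyq, hy⟩, hyq⟩
    · rwa [mem_preimage, hconst q hq y hy a ha]
  rw [hpre]
  exact .sUnion (hQ.mono (sep_subset _ _)) fun q hq => hmeas q hq.1

theorem Real.negMulLog_le_mul_neg_log {c p : ℝ} (hc : 0 < c) (hcp : c ≤ p) :
    Real.negMulLog p ≤ p * -Real.log c := by
  have hlog := Real.log_le_log hc hcp
  rw [Real.negMulLog]
  nlinarith

section

variable [MeasurableSpace X]

theorem MeasureTheory.MeasurePreserving.measure_symmDiff_preimage_eq_zero {μ : Measure X}
    [IsFiniteMeasure μ] {f : X → X} (hf : MeasurePreserving f μ μ) {s : Set X}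
    (hs : NullMeasurableSet s μ) (hsub : s ⊆ f ⁻¹' s) : μ (symmDiff s (f ⁻¹' s)) = 0 :=
  measure_symmDiff_eq_zero_iff.mpr <| ae_eq_of_subset_of_measure_ge hsub
    (hf.measure_preimage hs).le hs (measure_ne_top μ _)

theorem ErgodicMod0.measure_compl_eq_zero {μ : Measure X} [IsFiniteMeasure μ] {f : X → X}
    (herg : ErgodicMod0 μ f) (hf : MeasurePreserving f μ μ) {s : Set X} (hs : MeasurableSet s)
    (hsub : s ⊆ f ⁻¹' s) (hs₀ : μ s ≠ 0) : μ sᶜ = 0 :=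
  (herg s hs (hf.measure_symmDiff_preimage_eq_zero hs.nullMeasurableSet hsub)).resolve_left hs₀

theorem partitionEntropy_nonneg (μ : Measure X) [IsProbabilityMeasure μ] (Q : Set (Set X)) :
    0 ≤ partitionEntropy μ Q :=
  tsum_nonneg fun _ => Real.negMulLog_nonneg ENNReal.toReal_nonneg measureReal_le_one

theorem partitionEntropy_le_neg_log (μ : Measure X) [IsProbabilityMeasure μ] {Q : Set (Set X)}
    (hmeas : ∀ A ∈ Q, MeasurableSet A) (hdisj : Q.PairwiseDisjoint id) {c : ℝ} (hc : 0 < c)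
    (hc₁ : c ≤ 1) (hlarge : ∀ A ∈ Q, μ A = 0 ∨ c ≤ (μ A).toReal) :
    partitionEntropy μ Q ≤ -Real.log c := by
  set m : Q → ℝ≥0∞ := fun A => μ A
  have hsum : ∑' A, m A ≤ 1 :=
    (tsum_meas_le_meas_iUnion_of_disjoint μ (fun A : Q => hmeas A A.2)
      fun A B hAB => hdisj A.2 B.2 (Subtype.coe_injective.ne hAB)).trans prob_le_one
  have hm : Summable fun A => (m A).toReal :=
    ENNReal.summable_toReal (ne_top_of_le_ne_top ENNReal.one_ne_top hsum)
  have hterm (A : Q) : Real.negMulLog (m A).toReal ≤ -Real.log c * (m A).toReal := by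
    rcases hlarge A A.2 with h0 | hcA
    · simp [m, h0]
    · rw [mul_comm]
      exact Real.negMulLog_le_mul_neg_log hc hcA
  calc partitionEntropy μ Q ≤ ∑' A, -Real.log c * (m A).toReal :=
        ((hm.mul_left _).of_nonneg_of_le (fun _ => Real.negMulLog_nonneg ENNReal.toReal_nonneg
          measureReal_le_one) hterm).tsum_le_tsum hterm (hm.mul_left _)
    _ = -Real.log c * (∑' A, m A).toReal := by
        rw [tsum_mul_left, ENNReal.tsum_toReal_eq fun _ => measure_ne_top μ _]
    _ ≤ -Real.log c * 1 := by
        gcongr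
        · exact neg_nonneg.mpr (Real.log_nonpos hc.le hc₁)
        · exact ENNReal.toReal_le_of_le_ofReal zero_le_one (by simpa using hsum)
    _ = -Real.log c := mul_one _
end

def itineraryCylinder (f : X → X) (P : Set (Set X)) (n : ℕ) (x : X) : Set X :=
  {y | ∀ k ≤ n, ∃ ξ ∈ P, f^[k] x ∈ ξ ∧ f^[k] y ∈ ξ}

theorem sameItinerary_eq_iInter_itineraryCylinder (f : X → X) (P : Set (Set X)) (x : X) :
    sameItinerary f P x = ⋂ n, itineraryCylinder f P n x := by
  ext y
  simp only [sameItinerary, itineraryCylinder, mem_iInter]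
  exact ⟨fun hy _ k _ => hy k, fun hy k => hy k k le_rfl⟩

theorem antitone_itineraryCylinder (f : X → X) (P : Set (Set X)) (x : X) :
    Antitone fun n => itineraryCylinder f P n x :=
  fun _ _ hmn _ hy k hk => hy k (hk.trans hmn)

theorem sameItinerary_subset_preimage (f : X → X) (P : Set (Set X)) (x : X) :
    sameItinerary f P x ⊆ f ⁻¹' sameItinerary f P (f x) := by
  intro y hy n
  simpa only [← iterate_succ_apply] using hy (n + 1)

namespace IsCountablePartition

variable [MeasurableSpace X] {P : Set (Set X)}

theorem exists_mem (hP : IsCountablePartition P) (x : X) : ∃ ξ ∈ P, x ∈ ξ :=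
  mem_sUnion.mp (hP.2.2.2.2.symm ▸ mem_univ x)

theorem exists_mem_and_mem_iff (hP : IsCountablePartition P) {ξ : Set X} (hξ : ξ ∈ P)
    {x : X} (hx : x ∈ ξ) {y : X} : (∃ η ∈ P, x ∈ η ∧ y ∈ η) ↔ y ∈ ξ :=
  ⟨fun ⟨_, hη, hxη, hyη⟩ => hP.2.2.2.1.elim_set hη hξ x hxη hx ▸ hyη, fun hy => ⟨ξ, hξ, hx, hy⟩⟩

theorem itineraryCylinder_eq_biInter (hP : IsCountablePartition P) {f : X → X} {n : ℕ} {x : X}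
    {ξ : ℕ → Set X} (hξ : ∀ k ≤ n, ξ k ∈ P ∧ f^[k] x ∈ ξ k) :
    itineraryCylinder f P n x = ⋂ k ∈ Finset.range (n + 1), f^[k] ⁻¹' ξ k := by
  ext y
  simp only [itineraryCylinder, mem_iInter, mem_preimage, Finset.mem_range,
    Nat.lt_succ_iff]
  exact forall₂_congr fun k hk => hP.exists_mem_and_mem_iff (hξ k hk).1 (hξ k hk).2

theorem mem_itineraryCylinder_self (hP : IsCountablePartition P) (f : X → X) (n : ℕ) (x : X) :
    x ∈ itineraryCylinder f P n x := fun k _ =>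
  have ⟨ξ, hξ, hx⟩ := hP.exists_mem (f^[k] x)
  ⟨ξ, hξ, hx, hx⟩

theorem itineraryCylinder_mem_joinSeq (hP : IsCountablePartition P) (f : X → X) (n : ℕ) (x : X) :
    itineraryCylinder f P n x ∈ joinSeq f P n := by
  choose cell hcell using hP.exists_mem
  have hξ : ∀ k ≤ n, cell (f^[k] x) ∈ P ∧ f^[k] x ∈ cell (f^[k] x) := fun k _ => hcell _
  exact ⟨⟨x, hP.mem_itineraryCylinder_self f n x⟩, _, fun k hk => (hξ k hk).1,
    hP.itineraryCylinder_eq_biInter hξ⟩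

theorem eq_itineraryCylinder_of_mem_joinSeq (hP : IsCountablePartition P) {f : X → X} {n : ℕ}
    {A : Set X} (hA : A ∈ joinSeq f P n) {x : X} (hx : x ∈ A) : A = itineraryCylinder f P n x := by
  obtain ⟨-, ξ, hξ, rfl⟩ := hA
  simp only [mem_iInter, mem_preimage, Finset.mem_range, Nat.lt_succ_iff] at hx
  exact (hP.itineraryCylinder_eq_biInter fun k hk => ⟨hξ k hk, hx k hk⟩).symm

end IsCountablePartition

theorem isCountablePartition_joinSeq [MeasurableSpace X] {P : Set (Set X)}
    (hP : IsCountablePartition P) {f : X → X} (hf : Measurable f) (n : ℕ) :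
    IsCountablePartition (joinSeq f P n) := by
  refine ⟨?_, ?_, fun A hA => hA.1, ?_, ?_⟩
  · refine ((countable_pi fun _ : Fin (n + 1) => hP.1).image
      fun ξ => ⋂ k : Fin (n + 1), f^[k] ⁻¹' ξ k).mono ?_
    rintro A ⟨-, ξ, hξ, rfl⟩
    refine ⟨fun k => ξ k, fun k => hξ k (Nat.lt_succ_iff.mp k.2), ?_⟩
    ext y
    simp [Fin.forall_iff]
  · rintro A ⟨-, ξ, hξ, rfl⟩
    exact .biInter (Finset.range (n + 1)).countable_toSet fun k hk =>
      (hP.2.1 _ (hξ k (Nat.lt_succ_iff.mp (Finset.mem_range.mp hk)))).preimage (hf.iterate k)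
  · intro A hA B hB hAB
    refine disjoint_left.mpr fun x hxA hxB => hAB ?_
    rw [hP.eq_itineraryCylinder_of_mem_joinSeq hA hxA,
      hP.eq_itineraryCylinder_of_mem_joinSeq hB hxB]
  · exact eq_univ_of_forall fun x =>
      ⟨_, hP.itineraryCylinder_mem_joinSeq f n x, hP.mem_itineraryCylinder_self f n x⟩

namespace IsCountablePartition

variable [MeasurableSpace X] {μ : Measure X} {f : X → X} {P : Set (Set X)}

theorem measurableSet_itineraryCylinder (hP : IsCountablePartition P) (hf : Measurable f)
    (n : ℕ) (x : X) : MeasurableSet (itineraryCylinder f P n x) :=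
  (isCountablePartition_joinSeq hP hf n).2.1 _ (hP.itineraryCylinder_mem_joinSeq f n x)

theorem measurableSet_sameItinerary (hP : IsCountablePartition P) (hf : Measurable f) (x : X) :
    MeasurableSet (sameItinerary f P x) := by
  rw [sameItinerary_eq_iInter_itineraryCylinder]
  exact .iInter fun n => hP.measurableSet_itineraryCylinder hf n x

theorem measurable_measure_itineraryCylinder (hP : IsCountablePartition P) (hf : Measurable f)
    (μ : Measure X) (n : ℕ) : Measurable fun x => μ (itineraryCylinder f P n x) :=
  have hjoin := isCountablePartition_joinSeq hP hf n
  measurable_of_const_on_countable_cover hjoin.1 hjoin.2.1 hjoin.2.2.2.2 fun _ hA _ ha _ hb => by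
    rw [← hP.eq_itineraryCylinder_of_mem_joinSeq hA ha,
      ← hP.eq_itineraryCylinder_of_mem_joinSeq hA hb]

theorem measure_sameItinerary_eq_iInf [IsFiniteMeasure μ] (hP : IsCountablePartition P)
    (hf : Measurable f) (x : X) :
    μ (sameItinerary f P x) = ⨅ n, μ (itineraryCylinder f P n x) := by
  rw [sameItinerary_eq_iInter_itineraryCylinder]
  exact (antitone_itineraryCylinder f P x).measure_iInter
    (fun n => (hP.measurableSet_itineraryCylinder hf n x).nullMeasurableSet) ⟨0, measure_ne_top μ _⟩

theorem measurable_measure_sameItinerary [IsFiniteMeasure μ] (hP : IsCountablePartition P)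
    (hf : Measurable f) : Measurable fun x => μ (sameItinerary f P x) := by
  simp only [hP.measure_sameItinerary_eq_iInf hf]
  exact .iInf fun n => hP.measurable_measure_itineraryCylinder hf μ n

theorem sameItinerary_eq_of_mem (hP : IsCountablePartition P) {x y : X}
    (hy : y ∈ sameItinerary f P x) : sameItinerary f P y = sameItinerary f P x := by
  ext z
  refine forall_congr' fun n => ?_
  obtain ⟨ξ, hξ, hxξ, hyξ⟩ := hy n
  rw [hP.exists_mem_and_mem_iff hξ hyξ, hP.exists_mem_and_mem_iff hξ hxξ]

theorem measure_sameItinerary_le_apply (hP : IsCountablePartition P)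
    (hf : MeasurePreserving f μ μ) (x : X) :
    μ (sameItinerary f P x) ≤ μ (sameItinerary f P (f x)) :=
  (measure_mono (sameItinerary_subset_preimage f P x)).trans_eq
    (hf.measure_preimage (hP.measurableSet_sameItinerary hf.measurable _).nullMeasurableSet)

theorem measure_eq_zero_or_le_of_mem_joinSeq [IsFiniteMeasure μ] (hP : IsCountablePartition P)
    (hf : MeasurePreserving f μ μ) (herg : ErgodicMod0 μ f) (x : X) {n : ℕ} {A : Set X}
    (hA : A ∈ joinSeq f P n) : μ A = 0 ∨ μ (sameItinerary f P x) ≤ μ A := by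
  rcases eq_or_ne (μ (sameItinerary f P x)) 0 with hx | hx
  · exact .inr (hx ▸ zero_le)
  set T := {y | μ (sameItinerary f P x) ≤ μ (sameItinerary f P y)}
  have hxT : sameItinerary f P x ⊆ T := fun y hy => (congrArg μ (hP.sameItinerary_eq_of_mem hy)).ge
  have hTinv : T ⊆ f ⁻¹' T := fun y hy => hy.trans (hP.measure_sameItinerary_le_apply hf y)
  have hTfull : μ Tᶜ = 0 := herg.measure_compl_eq_zero hf
    (measurableSet_le measurable_const (hP.measurable_measure_sameItinerary hf.measurable))
    hTinv (ne_bot_of_le_ne_bot hx (measure_mono hxT))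
  rcases (A ∩ T).eq_empty_or_nonempty with hAT | ⟨y, hyA, hyT⟩
  · exact .inl (measure_mono_null (fun z hzA hzT => hAT.subset ⟨hzA, hzT⟩) hTfull)
  · refine .inr (hyT.trans (measure_mono ?_))
    rw [hP.eq_itineraryCylinder_of_mem_joinSeq hA hyA, sameItinerary_eq_iInter_itineraryCylinder]
    exact iInter_subset _ n

end IsCountablePartition

/-- `0 < h(f,P) < ∞` is encoded as a finite positive limit `h` of
`H(⋁_{k=0}^{n} f^{-k}(P)) / (n + 1)`. -/
theorem finite_partition_positive_entropy_isMeasureSensitive_general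
    [MeasurableSpace X] (μ : Measure X) [IsProbabilityMeasure μ]
    (f : X → X) (hpres : MeasurePreserving f μ μ) (herg : ErgodicMod0 μ f)
    (P : Set (Set X)) (hP : IsCountablePartition P)
    (h : ℝ) (hpos : 0 < h)
    (hlim : Filter.Tendsto
      (fun n : ℕ => partitionEntropy μ (joinSeq f P n) / (n + 1)) Filter.atTop (nhds h)) :
    IsMeasureSensitivePartition μ f P := by
  refine ⟨hP, fun x => ?_⟩
  by_contra hx
  set c := (μ (sameItinerary f P x)).toReal
  have hc : 0 < c := ENNReal.toReal_pos hx (measure_ne_top μ _)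
  have hbound (n : ℕ) : partitionEntropy μ (joinSeq f P n) ≤ -Real.log c :=
    have hjoin := isCountablePartition_joinSeq hP hpres.measurable n
    partitionEntropy_le_neg_log μ hjoin.2.1 hjoin.2.2.2.1 hc measureReal_le_one fun A hA =>
      (hP.measure_eq_zero_or_le_of_mem_joinSeq hpres herg x hA).imp_right
        (ENNReal.toReal_mono (measure_ne_top μ A))
  have hzero : Tendsto (fun n : ℕ => partitionEntropy μ (joinSeq f P n) / (n + 1)) atTop (nhds 0) :=
    tendsto_bdd_div_atTop_nhds_zero (.of_forall fun n => partitionEntropy_nonneg μ _)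
      (.of_forall hbound) (tendsto_atTop_add_const_right _ 1 tendsto_natCast_atTop_atTop)
  exact hpos.ne' (tendsto_nhds_unique hlim hzero)

/-- A finite partition with finite positive entropy of an ergodic
measure-preserving map of a probability space is measure-sensitive. Here
`0 < h(f,P) < ∞` is expressed by the existence of a finite positive limit
`h = lim_n H(⋁_{k=0}^{n-1} f^{-k}(P))/n`. -/
theorem finite_partition_positive_entropy_isMeasureSensitive
    [MeasurableSpace X] (μ : Measure X) [IsProbabilityMeasure μ]
    (f : X → X) (hpres : MeasurePreserving f μ μ) (herg : ErgodicMod0 μ f)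
    (P : Set (Set X)) (hP : IsCountablePartition P) (hfin : P.Finite)
    (h : ℝ) (hpos : 0 < h)
    (hlim : Filter.Tendsto
      (fun n : ℕ => partitionEntropy μ (joinSeq f P n) / (n + 1)) Filter.atTop (nhds h)) :
    IsMeasureSensitivePartition μ f P :=
  finite_partition_positive_entropy_isMeasureSensitive_general μ f hpres herg P hP h hpos hlim
end

section
/- Every ergodic measure-preserving map with positive entropy on a probability space is measure-expansive. -/
open MeasureTheory Set Function Filter
open scoped ENNReal

variable {X : Type*}

/-- The entropy `h(f,P) = lim_{n→∞} (1/n) H(⋁_{k=0}^{n-1} f^{-k}(P))` of `f` relative to `P`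
(realized as an `ℝ≥0∞`-valued limsup, which agrees with the limit whenever it exists). -/
noncomputable def mapPartitionEntropy [MeasurableSpace X] (μ : Measure X) (f : X → X)
    (P : Set (Set X)) : ℝ≥0∞ :=
  Filter.atTop.limsup fun n : ℕ =>
    ENNReal.ofReal (partitionEntropy μ (joinSeq f P n) / (n + 1))

/-- The entropy `h(f) = sup {h(f,Q) : Q a finite partition}` of `f`. -/
noncomputable def mapEntropy [MeasurableSpace X] (μ : Measure X) (f : X → X) : ℝ≥0∞ :=
  ⨆ (P : Set (Set X)) (_ : IsCountablePartition P ∧ P.Finite), mapPartitionEntropy μ f P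

open scoped Topology

/-!
Let `P` be a finite partition with `h(f, P) > 0` and suppose some itinerary class `[x]` of `P`
has positive measure. Measure preservation gives every class `[fⁿ x]` along the orbit measure at
least `μ [x]`, and distinct classes are disjoint, so only finitely many classes occur along the
orbit. Their union is forward invariant, hence conull by ergodicity. Every cell of
`⋁_{k ≤ n} f^{-k} P` is a union of classes, so at most that many cells have positive measure,
uniformly in `n`. Thus `H(⋁_{k ≤ n} f^{-k} P)` stays bounded and `h(f, P) = 0`.
-/

section

variable [MeasurableSpace X] {μ : Measure X}

theorem partitionEntropy_le_ncard {𝒬 : Set (Set X)} (h𝒬 : {Q ∈ 𝒬 | μ Q ≠ 0}.Finite) :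
    partitionEntropy μ 𝒬 ≤ {Q ∈ 𝒬 | μ Q ≠ 0}.ncard := by
  set g : Set X → ℝ := fun Q ↦ Real.negMulLog (μ Q).toReal
  have hsupp : ∀ Q ∉ h𝒬.toFinset, 𝒬.indicator g Q = 0 := by
    intro Q hQ
    by_cases hQ𝒬 : Q ∈ 𝒬
    · have hμQ : μ Q = 0 := by simpa [hQ𝒬] using hQ
      simp [g, hQ𝒬, hμQ]
    · simp [hQ𝒬]
  have hle_one : ∀ Q, 𝒬.indicator g Q ≤ 1 := by
    intro Q
    by_cases hQ𝒬 : Q ∈ 𝒬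
    · have := Real.negMulLog_le_one_sub_self (μ Q).toReal_nonneg
      simp only [indicator_of_mem hQ𝒬, g]
      linarith [(μ Q).toReal_nonneg]
    · simp [hQ𝒬]
  rw [partitionEntropy, tsum_subtype 𝒬 g, tsum_eq_sum hsupp, Set.ncard_eq_toFinset_card _ h𝒬]
  calc ∑ Q ∈ h𝒬.toFinset, 𝒬.indicator g Q ≤ ∑ _ ∈ h𝒬.toFinset, (1 : ℝ) :=
        Finset.sum_le_sum fun Q _ ↦ hle_one Q
    _ = h𝒬.toFinset.card := by simp

theorem Set.PairwiseDisjoint.finite_of_le_measure [IsFiniteMeasure μ] {𝒯 : Set (Set X)}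
    (h𝒯 : 𝒯.PairwiseDisjoint id) (hmeas : ∀ T ∈ 𝒯, MeasurableSet T) {ε : ℝ≥0∞} (hε : ε ≠ 0)
    (hle : ∀ T ∈ 𝒯, ε ≤ μ T) : 𝒯.Finite := by
  have hfin := Measure.finite_const_le_meas_of_disjoint_iUnion μ hε.bot_lt
    (As := fun T : 𝒯 ↦ (T : Set X)) (fun T ↦ hmeas T T.2)
    (fun T T' hne ↦ h𝒯 T.2 T'.2 (Subtype.coe_ne_coe.2 hne)) (measure_ne_top _ _)
  have huniv : {T : 𝒯 | ε ≤ μ T} = univ := eq_univ_of_forall fun T ↦ hle T T.2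
  rwa [huniv, finite_univ_iff, finite_coe_iff] at hfin

theorem Set.PairwiseDisjoint.finite_and_ncard_le_of_refines {𝒬 𝒯 : Set (Set X)}
    (h𝒬 : 𝒬.PairwiseDisjoint id) (h𝒯 : 𝒯.Finite) (hne : ∀ T ∈ 𝒯, T.Nonempty)
    (hconull : μ (⋃₀ 𝒯)ᶜ = 0) (hsub : ∀ Q ∈ 𝒬, ∀ T ∈ 𝒯, (Q ∩ T).Nonempty → T ⊆ Q) :
    {Q ∈ 𝒬 | μ Q ≠ 0}.Finite ∧ {Q ∈ 𝒬 | μ Q ≠ 0}.ncard ≤ 𝒯.ncard := by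
  have hmeet : ∀ Q ∈ {Q ∈ 𝒬 | μ Q ≠ 0}, ∃ T ∈ 𝒯, T ⊆ Q := by
    rintro Q ⟨hQ, hμQ⟩
    obtain ⟨x, hxQ, T, hT, hxT⟩ : (Q ∩ ⋃₀ 𝒯).Nonempty :=
      nonempty_of_measure_ne_zero (by rwa [measure_inter_conull hconull])
    exact ⟨T, hT, hsub Q hQ T hT ⟨x, hxQ, hxT⟩⟩
  choose! g hg𝒯 hgsub using hmeet
  have hinj : InjOn g {Q ∈ 𝒬 | μ Q ≠ 0} := fun Q hQ Q' hQ' hgQ ↦ by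
    obtain ⟨y, hy⟩ := hne _ (hg𝒯 Q hQ)
    exact h𝒬.elim_set hQ.1 hQ'.1 y (hgsub Q hQ hy) (hgsub Q' hQ' (hgQ ▸ hy))
  exact ⟨Finite.of_finite_image (h𝒯.subset (image_subset_iff.2 hg𝒯)) hinj,
    ncard_le_ncard_of_injOn g hg𝒯 hinj h𝒯⟩

theorem ErgodicMod0.measure_compl_eq_zero_of_subset_preimage [IsFiniteMeasure μ] {f : X → X}
    (herg : ErgodicMod0 μ f) (hpres : MeasurePreserving f μ μ) {A : Set X} (hA : MeasurableSet A)
    (hAf : A ⊆ f ⁻¹' A) (hA0 : μ A ≠ 0) : μ Aᶜ = 0 :=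
  (herg A hA <| measure_symmDiff_eq_zero_iff.2 <| ae_eq_of_subset_of_measure_ge hAf
    (hpres.measure_preimage hA.nullMeasurableSet).le hA.nullMeasurableSet
    (measure_ne_top _ _)).resolve_left hA0

end

section

variable {f : X → X} {P : Set (Set X)}

theorem mem_sameItinerary_self (hcover : ⋃₀ P = univ) (x : X) : x ∈ sameItinerary f P x := by
  intro n
  obtain ⟨ξ, hξ, hx⟩ : f^[n] x ∈ ⋃₀ P := hcover ▸ mem_univ _
  exact ⟨ξ, hξ, hx, hx⟩

theorem sameItinerary_eq_of_mem (hdisj : P.PairwiseDisjoint id) {x y : X}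
    (hy : y ∈ sameItinerary f P x) : sameItinerary f P y = sameItinerary f P x := by
  have hcell : ∀ n, ∀ ξ ∈ P, f^[n] y ∈ ξ ↔ f^[n] x ∈ ξ := fun n ξ hξ ↦ by
    obtain ⟨η, hη, hxη, hyη⟩ := hy n
    constructor
    · intro hyξ
      rwa [hdisj.elim_set hξ hη _ hyξ hyη]
    · intro hxξ
      rwa [hdisj.elim_set hξ hη _ hxξ hxη]
  ext z
  exact forall_congr' fun n ↦ exists_congr fun ξ ↦ and_congr_right fun hξ ↦ by
    rw [hcell n ξ hξ]

theorem pairwiseDisjoint_range_sameItinerary (hdisj : P.PairwiseDisjoint id) :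
    (range (sameItinerary f P)).PairwiseDisjoint id := by
  rintro _ ⟨x, rfl⟩ _ ⟨y, rfl⟩ hne
  refine disjoint_left.2 fun z hzx hzy ↦ hne ?_
  exact (sameItinerary_eq_of_mem hdisj hzx).symm.trans (sameItinerary_eq_of_mem hdisj hzy)

theorem mapsTo_iterate_sameItinerary (n : ℕ) (x : X) :
    MapsTo f^[n] (sameItinerary f P x) (sameItinerary f P (f^[n] x)) := fun y hy k ↦ by
  simpa only [← iterate_add_apply] using hy (k + n)

theorem measurableSet_sameItinerary [MeasurableSpace X] (hf : Measurable f) (hcount : P.Countable)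
    (hmeas : ∀ ξ ∈ P, MeasurableSet ξ) (x : X) : MeasurableSet (sameItinerary f P x) := by
  have hrepr : sameItinerary f P x = ⋂ n : ℕ, ⋃ ξ ∈ {ξ ∈ P | f^[n] x ∈ ξ}, f^[n] ⁻¹' ξ := by
    ext y
    simp only [sameItinerary, mem_ofPred_eq, mem_iInter, mem_iUnion, mem_preimage, exists_prop,
      and_assoc]
  rw [hrepr]
  exact .iInter fun n ↦ .biUnion (hcount.mono (sep_subset _ _)) fun ξ hξ ↦
    hf.iterate n (hmeas ξ hξ.1)

theorem measure_sameItinerary_le_iterate [MeasurableSpace X] {μ : Measure X}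
    (hpres : MeasurePreserving f μ μ) (hcount : P.Countable) (hmeas : ∀ ξ ∈ P, MeasurableSet ξ)
    (x : X) (n : ℕ) : μ (sameItinerary f P x) ≤ μ (sameItinerary f P (f^[n] x)) :=
  calc μ (sameItinerary f P x) ≤ μ (f^[n] ⁻¹' sameItinerary f P (f^[n] x)) :=
        measure_mono (mapsTo_iterate_sameItinerary n x)
    _ = μ (sameItinerary f P (f^[n] x)) := (hpres.iterate n).measure_preimage
        (measurableSet_sameItinerary hpres.measurable hcount hmeas _).nullMeasurableSet

theorem sameItinerary_subset_of_mem_joinSeq (hdisj : P.PairwiseDisjoint id) {Q : Set X} {n : ℕ}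
    (hQ : Q ∈ joinSeq f P n) {x : X} (hx : x ∈ Q) : sameItinerary f P x ⊆ Q := by
  obtain ⟨-, ξ, hξ, rfl⟩ := hQ
  intro y hy
  simp only [mem_iInter, mem_preimage, Finset.mem_range] at hx ⊢
  intro k hk
  obtain ⟨η, hη, hxη, hyη⟩ := hy k
  rwa [hdisj.elim_set hη (hξ k (Nat.lt_succ_iff.1 hk)) _ hxη (hx k hk)] at hyη

theorem pairwiseDisjoint_joinSeq (hdisj : P.PairwiseDisjoint id) (n : ℕ) :
    (joinSeq f P n).PairwiseDisjoint id := by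
  refine (pairwiseDisjoint_iff).2 fun Q hQ Q' hQ' ⟨x, hxQ, hxQ'⟩ ↦ ?_
  obtain ⟨-, ξ, hξ, rfl⟩ := hQ
  obtain ⟨-, ξ', hξ', rfl⟩ := hQ'
  simp only [id, mem_iInter, mem_preimage, Finset.mem_range] at hxQ hxQ'
  exact iInter₂_congr fun k hk ↦ by
    have hkn : k ≤ n := Nat.lt_succ_iff.1 (Finset.mem_range.1 hk)
    rw [hdisj.elim_set (hξ k hkn) (hξ' k hkn) _ (hxQ k (Finset.mem_range.1 hk))
      (hxQ' k (Finset.mem_range.1 hk))]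

theorem mapPartitionEntropy_eq_zero_of_le [MeasurableSpace X] {μ : Measure X} (C : ℝ)
    (hC : ∀ n, partitionEntropy μ (joinSeq f P n) ≤ C) : mapPartitionEntropy μ f P = 0 := by
  have hbound : Tendsto (fun n : ℕ ↦ ENNReal.ofReal (C / (n + 1))) atTop (𝓝 0) := by
    simpa [Function.comp_def] using (ENNReal.continuous_ofReal.tendsto 0).comp <|
      tendsto_const_nhds.div_atTop (tendsto_atTop_add_const_right _ 1 tendsto_natCast_atTop_atTop)
  refine Tendsto.limsup_eq <| tendsto_of_tendsto_of_tendsto_of_le_of_le tendsto_const_nhds hbound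
    (fun _ ↦ zero_le) fun n ↦ ENNReal.ofReal_le_ofReal ?_
  exact div_le_div_of_nonneg_right (hC n) (by positivity)

theorem mapPartitionEntropy_eq_zero_of_measure_sameItinerary_ne_zero [MeasurableSpace X]
    {μ : Measure X} [IsFiniteMeasure μ] (hpres : MeasurePreserving f μ μ) (herg : ErgodicMod0 μ f)
    (hP : IsCountablePartition P) {x : X} (hx : μ (sameItinerary f P x) ≠ 0) :
    mapPartitionEntropy μ f P = 0 := by
  obtain ⟨hcount, hmeas, -, hdisj, hcover⟩ := hP
  set 𝒯 := range fun n ↦ sameItinerary f P (f^[n] x)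
  have h𝒯meas : ∀ T ∈ 𝒯, MeasurableSet T := by
    rintro _ ⟨n, rfl⟩
    exact measurableSet_sameItinerary hpres.measurable hcount hmeas _
  have h𝒯le : ∀ T ∈ 𝒯, μ (sameItinerary f P x) ≤ μ T := by
    rintro _ ⟨n, rfl⟩
    exact measure_sameItinerary_le_iterate hpres hcount hmeas x n
  have h𝒯fin : 𝒯.Finite :=
    ((pairwiseDisjoint_range_sameItinerary hdisj).subset
      (range_comp_subset_range _ _)).finite_of_le_measure h𝒯meas hx h𝒯le
  have hinv : ⋃₀ 𝒯 ⊆ f ⁻¹' ⋃₀ 𝒯 := by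
    rintro y ⟨_, ⟨n, rfl⟩, hy⟩
    refine ⟨_, ⟨n + 1, rfl⟩, ?_⟩
    dsimp only at hy ⊢
    rw [iterate_succ_apply']
    exact mapsTo_iterate_sameItinerary 1 _ hy
  have hconull : μ (⋃₀ 𝒯)ᶜ = 0 := by
    refine herg.measure_compl_eq_zero_of_subset_preimage hpres
      (.sUnion h𝒯fin.countable h𝒯meas) hinv (ne_bot_of_le_ne_bot hx ?_)
    exact (h𝒯le _ ⟨0, rfl⟩).trans (measure_mono (subset_sUnion_of_mem ⟨0, rfl⟩))
  refine mapPartitionEntropy_eq_zero_of_le 𝒯.ncard fun n ↦ ?_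
  obtain ⟨hfin, hcard⟩ :=
    (pairwiseDisjoint_joinSeq (f := f) hdisj n).finite_and_ncard_le_of_refines h𝒯fin
    (by rintro _ ⟨k, rfl⟩; exact ⟨_, mem_sameItinerary_self hcover _⟩) hconull
    (by
      rintro Q hQ _ ⟨k, rfl⟩ ⟨y, hyQ, hy⟩
      dsimp only at hy ⊢
      rw [← sameItinerary_eq_of_mem hdisj hy]
      exact sameItinerary_subset_of_mem_joinSeq hdisj hQ hyQ)
  exact (partitionEntropy_le_ncard hfin).trans (by exact_mod_cast hcard)

end

/-- Every ergodic measure-preserving map with positive entropy on a probability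
space is measure-expansive. -/
theorem measureExpansive_of_ergodic_posEntropy
    [MeasurableSpace X] (μ : Measure X) [IsProbabilityMeasure μ]
    (f : X → X) (hpres : MeasurePreserving f μ μ) (herg : ErgodicMod0 μ f)
    (hent : 0 < mapEntropy μ f) :
    MeasureExpansive μ f := by
  obtain ⟨P, ⟨hP, -⟩, hPpos⟩ :
      ∃ P, (IsCountablePartition P ∧ P.Finite) ∧ 0 < mapPartitionEntropy μ f P := by
    simpa only [mapEntropy, lt_iSup_iff, exists_prop] using hent
  refine ⟨P, hP, fun x ↦ ?_⟩
  by_contra hx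
  exact hPpos.ne' (mapPartitionEntropy_eq_zero_of_measure_sameItinerary_ne_zero hpres herg hP hx)
end

section
/- Let P be a measure-sensitive partition of a negative nonsingular measurable map f : X → X on a measure space (X, 𝓑, μ). Then no element ξ ∈ P with 0 < μ(ξ) < ∞ is positively invariant (mod 0). -/
/-! If `ξ ⊆ f⁻¹ ξ` mod 0 and preimages of null sets are null, then `ξ ⊆ f⁻ⁿ ξ` mod 0 for
every `n`, so almost every point of `ξ` stays in `ξ` forever. All such points share one
itinerary, so measure-sensitivity makes their set null, contradicting `0 < μ ξ`. -/

open MeasureTheory Set Function Filter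
open scoped ENNReal

variable {X : Type*}

section NegativeNonsingular

variable [MeasurableSpace X] {μ : Measure X} {f : X → X}

theorem measure_preimage_null_of_forall_measurableSet
    (hf : ∀ A : Set X, MeasurableSet A → μ A = 0 → μ (f ⁻¹' A) = 0)
    {s : Set X} (hs : μ s = 0) : μ (f ⁻¹' s) = 0 :=
  measure_mono_null (preimage_mono (subset_toMeasurable μ s))
    (hf _ (measurableSet_toMeasurable μ s) (by rwa [measure_toMeasurable]))

theorem preimage_ae_le_preimage (hf : ∀ s : Set X, μ s = 0 → μ (f ⁻¹' s) = 0)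
    {s t : Set X} (hst : s ≤ᵐ[μ] t) : f ⁻¹' s ≤ᵐ[μ] f ⁻¹' t := by
  rw [ae_le_set, ← preimage_sdiff] at *
  exact hf _ hst

theorem ae_le_preimage_iterate_of_ae_le_preimage
    (hf : ∀ s : Set X, μ s = 0 → μ (f ⁻¹' s) = 0)
    {s : Set X} (hs : s ≤ᵐ[μ] f ⁻¹' s) (n : ℕ) : s ≤ᵐ[μ] f^[n] ⁻¹' s := by
  induction n with
  | zero => rfl
  | succ n ih =>
    rw [iterate_succ, preimage_comp]
    exact hs.trans (preimage_ae_le_preimage hf ih)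

theorem ae_le_iInter_preimage_iterate_of_ae_le_preimage
    (hf : ∀ s : Set X, μ s = 0 → μ (f ⁻¹' s) = 0)
    {s : Set X} (hs : s ≤ᵐ[μ] f ⁻¹' s) : s ≤ᵐ[μ] ⋂ n : ℕ, f^[n] ⁻¹' s := by
  have h := ae_all_iff.2 fun n => ae_le_preimage_iterate_of_ae_le_preimage hf hs n
  filter_upwards [h] with x hx hxs
  exact mem_iInter.2 fun n => hx n hxs

end NegativeNonsingular

theorem iInter_preimage_iterate_subset_sameItinerary {f : X → X} {P : Set (Set X)}
    {ξ : Set X} (hξ : ξ ∈ P) {x : X} (hx : x ∈ ⋂ n : ℕ, f^[n] ⁻¹' ξ) :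
    ⋂ n : ℕ, f^[n] ⁻¹' ξ ⊆ sameItinerary f P x := fun _ hy n =>
  ⟨ξ, hξ, mem_iInter.1 hx n, mem_iInter.1 hy n⟩

theorem measure_iInter_preimage_iterate_eq_zero [MeasurableSpace X] {μ : Measure X}
    {f : X → X} {P : Set (Set X)} (hP : ∀ x, μ (sameItinerary f P x) = 0)
    {ξ : Set X} (hξ : ξ ∈ P) : μ (⋂ n : ℕ, f^[n] ⁻¹' ξ) = 0 := by
  by_contra hpos
  obtain ⟨x, hx⟩ := nonempty_of_measure_ne_zero hpos
  exact hpos (measure_mono_null (iInter_preimage_iterate_subset_sameItinerary hξ hx) (hP x))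

theorem no_positivelyInvariant_element_of_measureSensitive_general
    [MeasurableSpace X] (μ : Measure X)
    (f : X → X)
    (hnns : ∀ A : Set X, MeasurableSet A → μ A = 0 → μ (f ⁻¹' A) = 0)
    (P : Set (Set X)) (hP : IsMeasureSensitivePartition μ f P)
    (ξ : Set X) (hξ : ξ ∈ P) (h0 : 0 < μ ξ) :
    ¬ μ (ξ \ f ⁻¹' ξ) = 0 := by
  intro hinv
  have hξ_le : ξ ≤ᵐ[μ] ⋂ n : ℕ, f^[n] ⁻¹' ξ :=
    ae_le_iInter_preimage_iterate_of_ae_le_preimage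
      (fun _ => measure_preimage_null_of_forall_measurableSet hnns) (ae_le_set.2 hinv)
  have hξ_null : μ ξ = 0 :=
    measure_mono_null_ae hξ_le (measure_iInter_preimage_iterate_eq_zero hP.2 hξ)
  exact h0.ne' hξ_null

/-- If `P` is a measure-sensitive partition of a negative nonsingular map `f`,
then no element of `P` with positive finite measure is positively invariant (mod 0). -/
theorem no_positivelyInvariant_element_of_measureSensitive
    [MeasurableSpace X] (μ : Measure X)
    (f : X → X) (hf : Measurable f)
    (hnns : ∀ A : Set X, MeasurableSet A → μ A = 0 → μ (f ⁻¹' A) = 0)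
    (P : Set (Set X)) (hP : IsMeasureSensitivePartition μ f P)
    (ξ : Set X) (hξ : ξ ∈ P) (h0 : 0 < μ ξ) (h1 : μ ξ < ⊤) :
    ¬ μ (ξ \ f ⁻¹' ξ) = 0 :=
  no_positivelyInvariant_element_of_measureSensitive_general μ f hnns P hP ξ hξ h0
end
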